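/- Let H₁ ∈ ℝ^{m₁×d}, H₂ ∈ ℝ^{m₂×d} have full row rank, y₁ ∈ ℝ^{m₁}, y₂ ∈ ℝ^{m₂}, and suppose the solution sets {x : H₁x = y₁} and {x : H₂x = y₂} are equal and nonempty. Let Σ ∈ ℝ^{d×d} be positive definite. Then for every t ∈ ℝ^d, (H₁t − y₁)ᵀ(H₁ΣH₁ᵀ)⁻¹(H₁t − y₁) = (H₂t − y₂)ᵀ(H₂ΣH₂ᵀ)⁻¹(H₂t − y₂). -/

import Mathlib

open Matrix

/-!
Equal nonempty solution sets give `ker H₁ = ker H₂`. If `Rᵢ` is a right inverse of the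
surjective `Hᵢ`, then `A = H₂ R₁` and `B = H₁ R₂` are mutually inverse with `A H₁ = H₂` and
`A y₁ = y₂`. Hence `H₂ Σ H₂ᵀ = A (H₁ Σ H₁ᵀ) Aᵀ` has inverse `Bᵀ (H₁ Σ H₁ᵀ)⁻¹ B`, and the
two quadratic forms agree.
-/

theorem map_eq_zero_of_setOf_eq {F G α β γ : Type*} [AddZeroClass α] [AddZeroClass β]
    [AddLeftCancelMonoid γ] [FunLike F α β] [AddMonoidHomClass F α β] [FunLike G α γ]
    [AddMonoidHomClass G α γ] {f : F} {g : G} {a : β} {b : γ}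
    (hne : {x | f x = a}.Nonempty) (heq : {x | f x = a} = {x | g x = b})
    {x : α} (hx : f x = 0) : g x = 0 := by
  obtain ⟨x₀, hx₀⟩ := hne
  have hgx₀ : g x₀ = b := (Set.ext_iff.mp heq x₀).mp hx₀
  have hgx : g (x₀ + x) = b :=
    (Set.ext_iff.mp heq _).mp (show f (x₀ + x) = a by rw [map_add, hx₀, hx, add_zero])
  rwa [map_add, hgx₀, add_eq_left] at hgx

theorem Matrix.mulVec_surjective_of_rank_eq_card {K m n : Type*} [Field K] [Fintype m]
    [Fintype n] {H : Matrix m n K} (h : H.rank = Fintype.card m) :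
    Function.Surjective H.mulVec := by
  have : LinearMap.range H.mulVecLin = ⊤ := by
    apply Submodule.eq_top_of_finrank_eq
    rw [← Matrix.rank, h, Module.finrank_fintype_fun_eq_card]
  exact LinearMap.range_eq_top.mp this

section CommRing

variable {R k m n : Type*} [CommRing R] [Fintype m] [Fintype n] [DecidableEq m]

theorem Matrix.mul_rightInverse_mul_eq {H₁ : Matrix m n R} {H₂ : Matrix k n R}
    {R₁ : Matrix n m R} (hR₁ : H₁ * R₁ = 1) (hker : ∀ x, H₁ *ᵥ x = 0 → H₂ *ᵥ x = 0) :
    H₂ * R₁ * H₁ = H₂ := by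
  refine ext_iff_mulVec.mpr fun x => ?_
  have hx : H₁ *ᵥ (R₁ *ᵥ (H₁ *ᵥ x) - x) = 0 := by
    rw [mulVec_sub, mulVec_mulVec, hR₁, one_mulVec, sub_self]
  have h := hker _ hx
  rwa [mulVec_sub, sub_eq_zero, mulVec_mulVec, mulVec_mulVec] at h

theorem Matrix.eq_one_of_mul_eq_self {X : Matrix m m R} {H : Matrix m n R} {R₁ : Matrix n m R}
    (hR₁ : H * R₁ = 1) (hX : X * H = H) : X = 1 := by
  calc X = X * H * R₁ := by rw [Matrix.mul_assoc, hR₁, Matrix.mul_one]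
    _ = 1 := by rw [hX, hR₁]

variable [Fintype k] [DecidableEq k]

theorem Matrix.exists_mul_eq_of_setOf_mulVec_eq {H₁ : Matrix m n R} {H₂ : Matrix k n R}
    {R₁ : Matrix n m R} {R₂ : Matrix n k R} (hR₁ : H₁ * R₁ = 1) (hR₂ : H₂ * R₂ = 1)
    {y₁ : m → R} {y₂ : k → R} (hne : {x | H₁ *ᵥ x = y₁}.Nonempty)
    (heq : {x | H₁ *ᵥ x = y₁} = {x | H₂ *ᵥ x = y₂}) :
    ∃ (A : Matrix k m R) (B : Matrix m k R),
      B * A = 1 ∧ A * B = 1 ∧ A * H₁ = H₂ ∧ A *ᵥ y₁ = y₂ := by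
  have hAH : H₂ * R₁ * H₁ = H₂ :=
    mul_rightInverse_mul_eq hR₁ fun _ => map_eq_zero_of_setOf_eq
      (f := H₁.mulVecLin) (g := H₂.mulVecLin) hne heq
  have hBH : H₁ * R₂ * H₂ = H₁ :=
    mul_rightInverse_mul_eq hR₂ fun _ => map_eq_zero_of_setOf_eq
      (f := H₂.mulVecLin) (g := H₁.mulVecLin) (heq ▸ hne) heq.symm
  refine ⟨H₂ * R₁, H₁ * R₂, eq_one_of_mul_eq_self hR₁ ?_, eq_one_of_mul_eq_self hR₂ ?_, hAH, ?_⟩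
  · rw [Matrix.mul_assoc, hAH, hBH]
  · rw [Matrix.mul_assoc, hBH, hAH]
  · obtain ⟨x₀, hx₀⟩ := hne
    rw [← hx₀, mulVec_mulVec, hAH]
    exact (Set.ext_iff.mp heq x₀).mp hx₀

theorem Matrix.dotProduct_mulVec_inv_conj {M : Matrix m m R} (hM : IsUnit M)
    {A : Matrix k m R} {B : Matrix m k R} (hBA : B * A = 1) (hAB : A * B = 1) (v : m → R) :
    (A *ᵥ v) ⬝ᵥ (A * M * Aᵀ)⁻¹ *ᵥ (A *ᵥ v) = v ⬝ᵥ M⁻¹ *ᵥ v := by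
  have hinv : (A * M * Aᵀ)⁻¹ = Bᵀ * M⁻¹ * B := by
    refine Matrix.inv_eq_right_inv ?_
    calc A * M * Aᵀ * (Bᵀ * M⁻¹ * B) = A * (M * (B * A)ᵀ * M⁻¹) * B := by
          simp only [transpose_mul, Matrix.mul_assoc]
      _ = A * B := by
          rw [hBA, transpose_one, Matrix.mul_one, Matrix.mul_nonsing_inv _
            ((isUnit_iff_isUnit_det M).mp hM), Matrix.mul_one]
      _ = 1 := hAB
  have hBAv : B *ᵥ (A *ᵥ v) = v := by rw [mulVec_mulVec, hBA, one_mulVec]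
  rw [hinv, ← mulVec_mulVec, ← mulVec_mulVec, hBAv, dotProduct_mulVec, vecMul_transpose, hBAv]

end CommRing

theorem Matrix.PosDef.mul_mul_transpose_of_mul_eq_one {R m n : Type*} [CommRing R]
    [PartialOrder R] [StarRing R] [TrivialStar R] [Fintype m] [Fintype n] [DecidableEq m]
    {S : Matrix n n R} (hS : S.PosDef) {H : Matrix m n R} {R₁ : Matrix n m R}
    (hR₁ : H * R₁ = 1) : (H * S * Hᵀ).PosDef := by
  rw [← conjTranspose_eq_transpose_of_trivial]
  refine hS.mul_mul_conjTranspose_same fun u v huv => ?_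
  simpa [vecMul_vecMul, hR₁] using congrArg (· ᵥ* R₁) huv

theorem WTS_invariance {d m₁ m₂ : ℕ}
    (H₁ : Matrix (Fin m₁) (Fin d) ℝ) (H₂ : Matrix (Fin m₂) (Fin d) ℝ)
    (y₁ : Fin m₁ → ℝ) (y₂ : Fin m₂ → ℝ)
    (h₁ : H₁.rank = m₁) (h₂ : H₂.rank = m₂)
    (hne : {x : Fin d → ℝ | H₁.mulVec x = y₁}.Nonempty)
    (heq : {x : Fin d → ℝ | H₁.mulVec x = y₁} = {x : Fin d → ℝ | H₂.mulVec x = y₂})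
    (Sig : Matrix (Fin d) (Fin d) ℝ) (hSig : Sig.PosDef) :
    ∀ t : Fin d → ℝ,
      dotProduct (H₁.mulVec t - y₁) ((H₁ * Sig * H₁ᵀ)⁻¹.mulVec (H₁.mulVec t - y₁))
        = dotProduct (H₂.mulVec t - y₂) ((H₂ * Sig * H₂ᵀ)⁻¹.mulVec (H₂.mulVec t - y₂)) := by
  intro t
  obtain ⟨R₁, hR₁⟩ := mulVec_surjective_iff_exists_right_inverse.mp
    (mulVec_surjective_of_rank_eq_card (h₁.trans (Fintype.card_fin m₁).symm))
  obtain ⟨R₂, hR₂⟩ := mulVec_surjective_iff_exists_right_inverse.mp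
    (mulVec_surjective_of_rank_eq_card (h₂.trans (Fintype.card_fin m₂).symm))
  obtain ⟨A, B, hBA, hAB, hAH, hAy⟩ := exists_mul_eq_of_setOf_mulVec_eq hR₁ hR₂ hne heq
  have hM : IsUnit (H₁ * Sig * H₁ᵀ) := (hSig.mul_mul_transpose_of_mul_eq_one hR₁).isUnit
  rw [← hAH, ← hAy, ← mulVec_mulVec, ← mulVec_sub, transpose_mul,
    show A * H₁ * Sig * (H₁ᵀ * Aᵀ) = A * (H₁ * Sig * H₁ᵀ) * Aᵀ by simp only [Matrix.mul_assoc]]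
  exact (dotProduct_mulVec_inv_conj hM hBA hAB _).symm
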